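/- Let δ be an integer with 1 ≤ δ ≤ q−1, assume p divides k+1, and let β = (0, γ^δ·α_1, …, γ^δ·α_k) ∈ F_q^{k+1} (so n = k+1). Set E := (k : F_q)·γ^{δk} + Σ_{i=1}^{ℓ} a_{1i}² ∈ F_q. Then the Euclidean hull of GRL_k(β, A) has F_q-dimension 1 if 2ℓ < k, or if k = 2ℓ and E ≠ 0; and it has F_q-dimension 2 if k = 2ℓ and E = 0. -/

import Mathlib

set_option maxHeartbeats 1600000
set_option linter.unusedVariables false
set_option linter.unusedSectionVars false

open Matrix BigOperators Finset

/-- Euclidean dual of a code `C ⊆ F^ι`. -/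
def dualE {F : Type} [Field F] {ι : Type} [Fintype ι] (C : Submodule F (ι → F)) :
    Submodule F (ι → F) where
  carrier := {x | ∀ y ∈ C, ∑ i, x i * y i = 0}
  add_mem' := by
    intro a b ha hb y hy
    have h : ∑ i, (a + b) i * y i = (∑ i, a i * y i) + ∑ i, b i * y i := by
      rw [← Finset.sum_add_distrib]
      exact Finset.sum_congr rfl fun i _ => add_mul _ _ _
    rw [h, ha y hy, hb y hy, add_zero]
  zero_mem' := by intro y hy; simp
  smul_mem' := by
    intro c a ha y hy
    have h : ∑ i, (c • a) i * y i = c * ∑ i, a i * y i := by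
      rw [Finset.mul_sum]
      exact Finset.sum_congr rfl fun i _ => by
        simp [Pi.smul_apply, smul_eq_mul, mul_assoc]
    rw [h, ha y hy, mul_zero]

/-- Generator matrix of the generalized Roth–Lempel code: evaluation columns indexed by `ι`
(entry `β j ^ r`), extra columns indexed by `Fin ℓ` (zero for rows `r < k - ℓ`, and the
corresponding row of `A` for rows `k - ℓ ≤ r ≤ k - 1`). -/
def GRLmatrix {F : Type} [Field F] (k ℓ : ℕ) (hℓk : ℓ ≤ k) {ι : Type} (β : ι → F)
    (A : Matrix (Fin ℓ) (Fin ℓ) F) : Matrix (Fin k) (ι ⊕ Fin ℓ) F :=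
  fun r => Sum.elim (fun j => β j ^ (r : ℕ))
    (fun j' => if _h : (r : ℕ) < k - ℓ then 0
      else A ⟨(r : ℕ) - (k - ℓ), by have := r.isLt; omega⟩ j')

/-- The generalized Roth–Lempel code: the row span of `GRLmatrix`. -/
def GRLcode {F : Type} [Field F] (k ℓ : ℕ) (hℓk : ℓ ≤ k) {ι : Type} (β : ι → F)
    (A : Matrix (Fin ℓ) (Fin ℓ) F) : Submodule F ((ι ⊕ Fin ℓ) → F) :=
  Submodule.span F (Set.range (GRLmatrix k ℓ hℓk β A))


open scoped Classical in
lemma geom_aux {F : Type} [Field F] (k : Nat) (x : F) (hx : x ^ k = 1) :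
    ∑ i : Fin k, x ^ ((i : Nat) + 1) = if x = 1 then (k : F) else 0 := by
  rcases eq_or_ne x 1 with h | h
  . simp [h]
  . rw [if_neg h]
    have h1 : ∑ i : Fin k, x ^ ((i : Nat) + 1) = x * ∑ i ∈ Finset.range k, x ^ i := by
      rw [Finset.mul_sum, ← Fin.sum_univ_eq_sum_range (fun i => x * x ^ i) k]
      exact Finset.sum_congr rfl fun i _ => by ring
    rw [h1, geom_sum_eq h, hx]
    simp

lemma sum_antidiag {F : Type} [Field F] (k : Nat) (c : F) (x : Fin k → F) (s : Fin k) :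
    (∑ r : Fin k, x r * (if (r : Nat) + (s : Nat) = k then c else 0)) =
      if h : 1 ≤ (s : Nat) then x ⟨k - (s : Nat), by have := s.isLt; omega⟩ * c else 0 := by
  by_cases hs : 1 ≤ (s : Nat)
  . rw [dif_pos hs]
    have h0 : ∀ b : Fin k, b ∈ Finset.univ → b ≠ (⟨k - (s : Nat), by have := s.isLt; omega⟩ : Fin k) →
        x b * (if (b : Nat) + (s : Nat) = k then c else 0) = 0 := by
      intro r _ hr
      have hr' : (r : Nat) ≠ k - (s : Nat) := fun h => hr (Fin.ext h)
      rw [if_neg (by have := s.isLt; omega), mul_zero]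
    rw [Finset.sum_eq_single _ h0 (fun h => absurd (Finset.mem_univ _) h),
      if_pos (show k - (s : Nat) + (s : Nat) = k by have := s.isLt; omega)]
  . rw [dif_neg hs]
    apply Finset.sum_eq_zero
    intro r _
    rw [if_neg (by have := r.isLt; omega), mul_zero]

/-- first standard basis vector -/
def e0v (F : Type) [Field F] (k : Nat) (hk : 0 < k) : Fin k → F :=
  Pi.single ⟨0, hk⟩ 1

/-- the second hull generator in the degenerate case -/
def vv (F : Type) [Field F] (k l : Nat) (hl : 0 < l) (hlk : l < k) (c : F)
    (B : Matrix (Fin l) (Fin l) F) : Fin k → F :=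
  fun t => if h : 1 ≤ (t : Nat) ∧ (t : Nat) ≤ l then
    -(B ⟨0, hl⟩ ⟨l - (t : Nat), by omega⟩) / c else 0

lemma e0v_ne (F : Type) [Field F] (k : Nat) (hk : 0 < k) : e0v F k hk ≠ 0 := by
  intro h
  have := congrFun h ⟨0, hk⟩
  rw [e0v, Pi.single_eq_same, Pi.zero_apply] at this
  exact one_ne_zero this

section Ker

variable {F : Type} [Field F] (k l : Nat) (hl2 : 2 ≤ l) (hlk : l < k) (c : F) (hc : c ≠ 0)
  (B : Matrix (Fin l) (Fin l) F) (N : Matrix (Fin k) (Fin k) F)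
  (hN : ∀ r s : Fin k, N r s =
    (if (r : Nat) + (s : Nat) = k then c else 0) +
    (if k - l ≤ (r : Nat) ∧ k - l ≤ (s : Nat) then
       B ⟨(r : Nat) - (k - l), by have := r.isLt; omega⟩ ⟨(s : Nat) - (k - l), by have := s.isLt; omega⟩ else 0))

include hN in
lemma vm_eq (x : Fin k → F) (s : Fin k) :
    (x ᵥ* N) s =
      (if h : 1 ≤ (s : Nat) then x ⟨k - (s : Nat), by have := s.isLt; omega⟩ * c else 0) +
      ∑ r : Fin k, x r * (if k - l ≤ (r : Nat) ∧ k - l ≤ (s : Nat) then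
        B ⟨(r : Nat) - (k - l), by have := r.isLt; omega⟩ ⟨(s : Nat) - (k - l), by have := s.isLt; omega⟩ else 0) := by
  have h1 : (x ᵥ* N) s = ∑ r : Fin k, x r * N r s := by
    simp [Matrix.vecMul, dotProduct]
  rw [h1]
  calc ∑ r : Fin k, x r * N r s
      = ∑ r : Fin k, (x r * (if (r : Nat) + (s : Nat) = k then c else 0)
        + x r * (if k - l ≤ (r : Nat) ∧ k - l ≤ (s : Nat) then
            B ⟨(r : Nat) - (k - l), by have := r.isLt; omega⟩ ⟨(s : Nat) - (k - l), by have := s.isLt; omega⟩ else 0)) := by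
        refine Finset.sum_congr rfl fun r _ => ?_
        rw [hN r s, mul_add]
    _ = _ := by
        rw [Finset.sum_add_distrib, sum_antidiag]

include hl2 hlk hc hN in
lemma ker_gt (x : Fin k → F) (hx : x ᵥ* N = 0) :
    ∀ r : Fin k, l < (r : Nat) → x r = 0 := by
  intro r hr
  have hrk := r.isLt
  obtain ⟨s, hsv⟩ : ∃ s : Fin k, (s : Nat) = k - (r : Nat) := ⟨⟨k - (r : Nat), by omega⟩, rfl⟩
  have h0 := congrFun hx s
  rw [vm_eq k l hl2 hlk c B N hN, Pi.zero_apply] at h0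
  rw [dif_pos (show 1 ≤ (s : Nat) by omega)] at h0
  have hblock : ∑ r' : Fin k, x r' * (if k - l ≤ (r' : Nat) ∧ k - l ≤ (s : Nat) then
      B ⟨(r' : Nat) - (k - l), by have := r'.isLt; omega⟩ ⟨(s : Nat) - (k - l), by have := s.isLt; omega⟩ else 0) = 0 := by
    apply Finset.sum_eq_zero
    intro r' _
    rw [if_neg (by omega), mul_zero]
  rw [hblock, add_zero] at h0
  have hidx : (⟨k - (s : Nat), by have := s.isLt; omega⟩ : Fin k) = r := by
    apply Fin.ext
    show k - (s : Nat) = (r : Nat)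
    omega
  rw [hidx] at h0
  exact (mul_eq_zero.1 h0).resolve_right hc

include hl2 hlk hN in
omit hc in
lemma ker_low (x : Fin k → F) (hx : x ᵥ* N = 0) (t : Fin k) (h1 : 1 ≤ (t : Nat))
    (h2 : (t : Nat) ≤ l) :
    x t * c + ∑ r : Fin k, x r * (if k - l ≤ (r : Nat) then
      B ⟨(r : Nat) - (k - l), by have := r.isLt; omega⟩ ⟨l - (t : Nat), by omega⟩ else 0) = 0 := by
  have htk := t.isLt
  obtain ⟨s, hsv⟩ : ∃ s : Fin k, (s : Nat) = k - (t : Nat) := ⟨⟨k - (t : Nat), by omega⟩, rfl⟩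
  have h0 := congrFun hx s
  rw [vm_eq k l hl2 hlk c B N hN, Pi.zero_apply] at h0
  rw [dif_pos (show 1 ≤ (s : Nat) by omega)] at h0
  have hidx : (⟨k - (s : Nat), by have := s.isLt; omega⟩ : Fin k) = t := by
    apply Fin.ext
    show k - (s : Nat) = (t : Nat)
    omega
  rw [hidx] at h0
  have hblock : ∑ r' : Fin k, x r' * (if k - l ≤ (r' : Nat) ∧ k - l ≤ (s : Nat) then
      B ⟨(r' : Nat) - (k - l), by have := r'.isLt; omega⟩ ⟨(s : Nat) - (k - l), by have := s.isLt; omega⟩ else 0)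
      = ∑ r' : Fin k, x r' * (if k - l ≤ (r' : Nat) then
      B ⟨(r' : Nat) - (k - l), by have := r'.isLt; omega⟩ ⟨l - (t : Nat), by omega⟩ else 0) := by
    refine Finset.sum_congr rfl fun r' _ => ?_
    by_cases hr' : k - l ≤ (r' : Nat)
    . rw [if_pos (And.intro hr' (by omega)), if_pos hr']
      congr 1
      exact congrArg _ (Fin.ext (show (s : Nat) - (k - l) = l - (t : Nat) by omega))
    . rw [if_neg (fun hcon => hr' hcon.1), if_neg hr']
  rw [hblock] at h0
  exact h0

include hlk in
omit hc hN in
lemma block_sum (hk2 : k = 2*l) (x : Fin k → F) (hx : ∀ r : Fin k, l < (r : Nat) → x r = 0)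
    (j : Fin l) :
    ∑ r : Fin k, x r * (if k - l ≤ (r : Nat) then
      B ⟨(r : Nat) - (k - l), by have := r.isLt; omega⟩ j else 0)
      = x ⟨l, by omega⟩ * B ⟨0, by omega⟩ j := by
  rw [Finset.sum_eq_single (⟨l, by omega⟩ : Fin k) ?h0 (fun h => absurd (Finset.mem_univ _) h)]
  . rw [if_pos (show k - l ≤ l by omega)]
    have hfin : (⟨l - (k - l), by omega⟩ : Fin l) = (⟨0, by omega⟩ : Fin l) :=
      Fin.ext (show l - (k - l) = 0 by omega)
    rw [hfin]
  . intro r _ hr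
    by_cases h : k - l ≤ (r : Nat)
    . rw [hx r (by
        have hne : (r : Nat) ≠ l := fun hh => hr (Fin.ext hh)
        omega), zero_mul]
    . rw [if_neg h, mul_zero]

include hl2 hlk hc hN in
lemma e0_ker : (e0v F k (by omega)) ᵥ* N = 0 := by
  funext s
  rw [vm_eq k l hl2 hlk c B N hN, Pi.zero_apply]
  have h1 : (if h : 1 ≤ (s : Nat) then
      e0v F k (by omega) ⟨k - (s : Nat), by have := s.isLt; omega⟩ * c else 0) = 0 := by
    by_cases hs : 1 ≤ (s : Nat)
    . rw [dif_pos hs, e0v, Pi.single_eq_of_ne, zero_mul]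
      intro h
      have h2 : k - (s : Nat) = 0 := congrArg Fin.val h
      have := s.isLt
      omega
    . rw [dif_neg hs]
  rw [h1, zero_add]
  apply Finset.sum_eq_zero
  intro r _
  by_cases hr : r = (⟨0, by omega⟩ : Fin k)
  . subst hr
    rw [if_neg, mul_zero]
    intro hcon
    have h2 : k - l ≤ 0 := hcon.1
    omega
  . rw [e0v, Pi.single_eq_of_ne hr, zero_mul]

include hl2 hlk hc hN in
lemma ker1 (h2l : 2*l < k) :
    LinearMap.ker N.vecMulLinear = Submodule.span F {e0v F k (by omega)} := by
  apply le_antisymm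
  . intro x hx
    rw [LinearMap.mem_ker, Matrix.vecMulLinear_apply] at hx
    have hgt := ker_gt k l hl2 hlk c hc B N hN x hx
    have hall : ∀ t : Fin k, 1 ≤ (t : Nat) → x t = 0 := by
      intro t h1
      by_cases h2 : l < (t : Nat)
      . exact hgt t h2
      . push_neg at h2
        have heq := ker_low k l hl2 hlk c B N hN x hx t h1 h2
        have hbl : ∑ r : Fin k, x r * (if k - l ≤ (r : Nat) then
            B ⟨(r : Nat) - (k - l), by have := r.isLt; omega⟩ ⟨l - (t : Nat), by omega⟩ else 0) = 0 := by
          apply Finset.sum_eq_zero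
          intro r _
          by_cases hr : k - l ≤ (r : Nat)
          . rw [hgt r (by omega), zero_mul]
          . rw [if_neg hr, mul_zero]
        rw [hbl, add_zero] at heq
        exact (mul_eq_zero.1 heq).resolve_right hc
    have hxe : x = x ⟨0, by omega⟩ • e0v F k (by omega) := by
      funext t
      by_cases ht : t = (⟨0, by omega⟩ : Fin k)
      . subst ht; simp [e0v]
      . have hv : (t : Nat) ≠ 0 := fun h => ht (Fin.ext h)
        rw [hall t (by omega), Pi.smul_apply, e0v, Pi.single_eq_of_ne ht, smul_zero]
    rw [hxe]
    exact Submodule.smul_mem _ _ (Submodule.subset_span rfl)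
  . rw [Submodule.span_le, Set.singleton_subset_iff, SetLike.mem_coe, LinearMap.mem_ker,
      Matrix.vecMulLinear_apply]
    exact e0_ker k l hl2 hlk c hc B N hN

include hl2 hlk hc hN in
lemma ker2 (hk2 : k = 2*l) (hE : c + B ⟨0, by omega⟩ ⟨0, by omega⟩ ≠ 0) :
    LinearMap.ker N.vecMulLinear = Submodule.span F {e0v F k (by omega)} := by
  apply le_antisymm
  . intro x hx
    rw [LinearMap.mem_ker, Matrix.vecMulLinear_apply] at hx
    have hgt := ker_gt k l hl2 hlk c hc B N hN x hx
    have hxl : x (⟨l, by omega⟩ : Fin k) = 0 := by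
      have heq := ker_low k l hl2 hlk c B N hN x hx ⟨l, by omega⟩
        (show 1 ≤ l by omega) (show l ≤ l by omega)
      rw [block_sum k l hl2 hlk B hk2 x hgt] at heq
      have hfin : (⟨l - ((⟨l, by omega⟩ : Fin k) : Nat), show l - l < l by omega⟩ : Fin l)
          = (⟨0, by omega⟩ : Fin l) := Fin.ext (show l - l = 0 by omega)
      rw [hfin] at heq
      have h3 : x (⟨l, by omega⟩ : Fin k) * (c + B ⟨0, by omega⟩ ⟨0, by omega⟩) = 0 := by
        linear_combination heq
      exact (mul_eq_zero.1 h3).resolve_right hE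
    have hall : ∀ t : Fin k, 1 ≤ (t : Nat) → x t = 0 := by
      intro t h1
      by_cases h2 : l < (t : Nat)
      . exact hgt t h2
      . push_neg at h2
        have heq := ker_low k l hl2 hlk c B N hN x hx t h1 h2
        rw [block_sum k l hl2 hlk B hk2 x hgt, hxl, zero_mul, add_zero] at heq
        exact (mul_eq_zero.1 heq).resolve_right hc
    have hxe : x = x ⟨0, by omega⟩ • e0v F k (by omega) := by
      funext t
      by_cases ht : t = (⟨0, by omega⟩ : Fin k)
      . subst ht; simp [e0v]
      . have hv : (t : Nat) ≠ 0 := fun h => ht (Fin.ext h)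
        rw [hall t (by omega), Pi.smul_apply, e0v, Pi.single_eq_of_ne ht, smul_zero]
    rw [hxe]
    exact Submodule.smul_mem _ _ (Submodule.subset_span rfl)
  . rw [Submodule.span_le, Set.singleton_subset_iff, SetLike.mem_coe, LinearMap.mem_ker,
      Matrix.vecMulLinear_apply]
    exact e0_ker k l hl2 hlk c hc B N hN

include hl2 hlk hc hN in
lemma vv_ker (hk2 : k = 2*l) (hE : c + B ⟨0, by omega⟩ ⟨0, by omega⟩ = 0) :
    (vv F k l (by omega) hlk c B) ᵥ* N = 0 := by
  have hgt : ∀ r : Fin k, l < (r : Nat) → vv F k l (by omega : 0 < l) hlk c B r = 0 := by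
    intro r hr
    rw [vv, dif_neg (by omega)]
  funext s
  rw [vm_eq k l hl2 hlk c B N hN, Pi.zero_apply]
  have hsk := s.isLt
  by_cases hs : k - l ≤ (s : Nat)
  . have hbl : ∑ r : Fin k, vv F k l (by omega : 0 < l) hlk c B r * (if k - l ≤ (r : Nat) ∧ k - l ≤ (s : Nat) then
        B ⟨(r : Nat) - (k - l), by have := r.isLt; omega⟩ ⟨(s : Nat) - (k - l), by have := s.isLt; omega⟩ else 0)
        = ∑ r : Fin k, vv F k l (by omega : 0 < l) hlk c B r * (if k - l ≤ (r : Nat) then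
        B ⟨(r : Nat) - (k - l), by have := r.isLt; omega⟩ ⟨(s : Nat) - (k - l), by have := s.isLt; omega⟩ else 0) := by
      refine Finset.sum_congr rfl fun r _ => ?_
      by_cases hr : k - l ≤ (r : Nat)
      . rw [if_pos (And.intro hr hs), if_pos hr]
      . rw [if_neg (fun hcon => hr hcon.1), if_neg hr]
    rw [hbl, block_sum k l hl2 hlk B hk2 _ hgt]
    have hvl : vv F k l (by omega : 0 < l) hlk c B ⟨l, by omega⟩ = 1 := by
      rw [vv, dif_pos (show 1 ≤ l ∧ l ≤ l by omega)]
      have hfin : (⟨l - l, by omega⟩ : Fin l) = (⟨0, by omega⟩ : Fin l) :=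
        Fin.ext (show l - l = 0 by omega)
      rw [hfin]
      have hB : B ⟨0, by omega⟩ ⟨0, by omega⟩ = -c := by linear_combination hE
      rw [hB, neg_neg, div_self hc]
    rw [hvl, one_mul]
    have hanti : (if h : 1 ≤ (s : Nat) then
        vv F k l (by omega : 0 < l) hlk c B ⟨k - (s : Nat), by have := s.isLt; omega⟩ * c else 0)
        = -(B ⟨0, by omega⟩ ⟨(s : Nat) - (k - l), by omega⟩) := by
      rw [dif_pos (show 1 ≤ (s : Nat) by omega)]
      rw [vv, dif_pos (show 1 ≤ k - (s : Nat) ∧ k - (s : Nat) ≤ l by omega)]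
      have hfin : (⟨l - (k - (s : Nat)), by omega⟩ : Fin l)
          = (⟨(s : Nat) - (k - l), by omega⟩ : Fin l) :=
        Fin.ext (show l - (k - (s : Nat)) = (s : Nat) - (k - l) by omega)
      rw [hfin, div_mul_cancel_of_imp (fun h => absurd h hc)]
    rw [hanti]
    exact neg_add_cancel _
  . have h1 : (if h : 1 ≤ (s : Nat) then
        vv F k l (by omega : 0 < l) hlk c B ⟨k - (s : Nat), by have := s.isLt; omega⟩ * c else 0) = 0 := by
      by_cases hs1 : 1 ≤ (s : Nat)
      . rw [dif_pos hs1, vv,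
          dif_neg (show ¬ (1 ≤ k - (s : Nat) ∧ k - (s : Nat) ≤ l) by omega), zero_mul]
      . rw [dif_neg hs1]
    rw [h1, zero_add]
    apply Finset.sum_eq_zero
    intro r _
    rw [if_neg (fun hcon => hs hcon.2), mul_zero]

include hl2 hlk hc hN in
lemma ker3 (hk2 : k = 2*l) (hE : c + B ⟨0, by omega⟩ ⟨0, by omega⟩ = 0) :
    LinearMap.ker N.vecMulLinear
      = Submodule.span F {e0v F k (by omega), vv F k l (by omega) hlk c B} := by
  apply le_antisymm
  . intro x hx
    rw [LinearMap.mem_ker, Matrix.vecMulLinear_apply] at hx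
    have hgt := ker_gt k l hl2 hlk c hc B N hN x hx
    have hmid : ∀ t : Fin k, 1 ≤ (t : Nat) → (t : Nat) ≤ l →
        x t = x (⟨l, by omega⟩ : Fin k) * vv F k l (by omega : 0 < l) hlk c B t := by
      intro t h1 h2
      have heq := ker_low k l hl2 hlk c B N hN x hx t h1 h2
      rw [block_sum k l hl2 hlk B hk2 x hgt] at heq
      rw [vv, dif_pos (And.intro h1 h2), ← mul_div_assoc, eq_div_iff hc]
      linear_combination heq
    have hxe : x = x ⟨0, by omega⟩ • e0v F k (by omega)
        + x (⟨l, by omega⟩ : Fin k) • vv F k l (by omega) hlk c B := by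
      funext t
      rw [Pi.add_apply, Pi.smul_apply, Pi.smul_apply, smul_eq_mul, smul_eq_mul]
      by_cases ht : t = (⟨0, by omega⟩ : Fin k)
      . subst ht
        rw [e0v, Pi.single_eq_same, vv, dif_neg (show ¬ (1 ≤ 0 ∧ 0 ≤ l) by omega)]
        ring
      . have hv : (t : Nat) ≠ 0 := fun h => ht (Fin.ext h)
        rw [e0v, Pi.single_eq_of_ne ht, mul_zero, zero_add]
        by_cases h2 : l < (t : Nat)
        . rw [hgt t h2, vv, dif_neg (by omega), mul_zero]
        . exact hmid t (by omega) (by omega)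
    rw [hxe]
    exact Submodule.add_mem _
      (Submodule.smul_mem _ _ (Submodule.subset_span (Set.mem_insert _ _)))
      (Submodule.smul_mem _ _ (Submodule.subset_span (Set.mem_insert_of_mem _ rfl)))
  . rw [Submodule.span_le, Set.insert_subset_iff, Set.singleton_subset_iff]
    constructor
    . rw [SetLike.mem_coe, LinearMap.mem_ker, Matrix.vecMulLinear_apply]
      exact e0_ker k l hl2 hlk c hc B N hN
    . rw [SetLike.mem_coe, LinearMap.mem_ker, Matrix.vecMulLinear_apply]
      exact vv_ker k l hl2 hlk c hc B N hN hk2 hE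

end Ker

lemma finrank_span_pair {F : Type} [Field F] {n : Type} (x y : n → F) (i j : n)
    (hxi : x i = 1) (hxj : x j = 0) (hyi : y i = 0) (hyj : y j = 1) :
    Module.finrank F (Submodule.span F ({x, y} : Set (n → F))) = 2 := by
  have hrange : ({x, y} : Set (n → F)) = Set.range ![x, y] := by
    ext z
    simp only [Set.mem_insert_iff, Set.mem_singleton_iff, Matrix.range_cons,
      Matrix.range_empty, Set.union_empty, Set.union_singleton, Set.mem_insert_iff]
    tauto
  have hli : LinearIndependent F ![x, y] := by
    rw [linearIndependent_fin2]
    constructor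
    . simp only [Matrix.cons_val_one, Matrix.head_cons, Matrix.cons_val_zero]
      intro h
      have := congrFun h j
      rw [hyj, Pi.zero_apply] at this
      exact one_ne_zero this
    . intro a h
      simp only [Matrix.cons_val_one, Matrix.head_cons, Matrix.cons_val_zero] at h
      have := congrFun h i
      rw [Pi.smul_apply, hyi, hxi, smul_zero] at this
      exact one_ne_zero this.symm
  rw [hrange, finrank_span_eq_card hli, Fintype.card_fin]

lemma mem_dualE {F : Type} [Field F] {ι : Type} [Fintype ι] (C : Submodule F (ι → F))
    (x : ι → F) : x ∈ dualE C ↔ ∀ y ∈ C, ∑ i, x i * y i = 0 := Iff.rfl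

lemma hull_finrank {F : Type} [Field F] {m n : Type} [Fintype m] [Fintype n]
    (G : Matrix m n F) (hGinj : Function.Injective G.vecMulLinear) :
    Module.finrank F ↥(Submodule.span F (Set.range G) ⊓ dualE (Submodule.span F (Set.range G)))
      = Module.finrank F ↥(LinearMap.ker (G * Gᵀ).vecMulLinear) := by
  have hpair : ∀ (x : m → F) (s : m),
      ∑ j, (x ᵥ* G) j * G s j = (x ᵥ* (G * Gᵀ)) s := by
    intro x s
    simp only [Matrix.vecMul, dotProduct, Matrix.mul_apply, Matrix.transpose_apply]
    simp_rw [Finset.sum_mul, Finset.mul_sum]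
    rw [Finset.sum_comm]
    exact Finset.sum_congr rfl fun r _ => Finset.sum_congr rfl fun j _ => by ring
  have key : Submodule.span F (Set.range G) ⊓ dualE (Submodule.span F (Set.range G))
      = Submodule.map G.vecMulLinear (LinearMap.ker (G * Gᵀ).vecMulLinear) := by
    ext y
    simp only [Submodule.mem_inf, Submodule.mem_map, LinearMap.mem_ker]
    constructor
    · rintro ⟨hyC, hyD⟩
      rw [show Set.range G = Set.range G.row from rfl, ← range_vecMulLinear] at hyC
      obtain ⟨x, rfl⟩ := hyC
      refine ⟨x, ?_, rfl⟩
      funext s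
      have h1 := hpair x s
      rw [Matrix.vecMulLinear_apply] at *
      rw [Pi.zero_apply, ← h1]
      exact hyD (G s) (Submodule.subset_span ⟨s, rfl⟩)
    · rintro ⟨x, hx, rfl⟩
      constructor
      · have : G.vecMulLinear x ∈ LinearMap.range G.vecMulLinear := ⟨x, rfl⟩
        rwa [range_vecMulLinear] at this
      · rw [Matrix.vecMulLinear_apply, mem_dualE]
        intro y hy
        induction hy using Submodule.span_induction with
        | mem z hz =>
          obtain ⟨s, rfl⟩ := hz
          rw [hpair x s]
          have := congrFun hx s
          rw [Matrix.vecMulLinear_apply] at this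
          simpa using this
        | zero => simp
        | add a b _ _ ha hb =>
          have h2 : ∑ i, (x ᵥ* G) i * (a + b) i
              = (∑ i, (x ᵥ* G) i * a i) + ∑ i, (x ᵥ* G) i * b i := by
            rw [← Finset.sum_add_distrib]
            exact Finset.sum_congr rfl fun i _ => by simp [mul_add]
          rw [h2, ha, hb, add_zero]
        | smul a z _ hz =>
          have h2 : ∑ i, (x ᵥ* G) i * (a • z) i = a * ∑ i, (x ᵥ* G) i * z i := by
            rw [Finset.mul_sum]
            exact Finset.sum_congr rfl fun i _ => by simp [mul_left_comm]
          rw [h2, hz, mul_zero]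
  rw [key]
  exact (Submodule.equivMapOfInjective _ hGinj _).finrank_eq.symm

lemma GRL_inj {F : Type} [Field F] (k l : Nat) (hlk : l <= k) (beta : Fin (k+1) -> F)
    (A : Matrix (Fin l) (Fin l) F) (hbeta : Function.Injective beta) :
    Function.Injective (GRLmatrix k l hlk beta A).vecMulLinear := by
  rw [← LinearMap.ker_eq_bot, LinearMap.ker_eq_bot']
  intro z hz
  rw [Matrix.vecMulLinear_apply] at hz
  set w : Fin k -> F := fun j => beta j.castSucc with hw
  have hwinj : Function.Injective w := fun a b hab => by
    have := hbeta hab; exact Fin.castSucc_injective k this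
  have hV : (Matrix.vandermonde w).det ≠ 0 := Matrix.det_vandermonde_ne_zero_iff.2 hwinj
  have h1 : Matrix.vandermonde w *ᵥ z = 0 := by
    funext j
    have h2 := congrFun hz (Sum.inl j.castSucc)
    simp only [Matrix.vecMul, dotProduct, GRLmatrix, Sum.elim_inl, Pi.zero_apply] at h2
    simp only [Matrix.mulVec, dotProduct, Matrix.vandermonde, Pi.zero_apply]
    rw [← h2]
    exact Finset.sum_congr rfl fun r _ => by rw [mul_comm]; rfl
  have h3 : (Matrix.vandermonde w)⁻¹ *ᵥ (Matrix.vandermonde w *ᵥ z) = z := by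
    rw [Matrix.mulVec_mulVec, Matrix.nonsing_inv_mul _ (isUnit_iff_ne_zero.2 hV),
      Matrix.one_mulVec]
  rw [h1, Matrix.mulVec_zero] at h3
  exact h3.symm


/-- with `p ∣ k+1` and `β = (0, γ^δ·α_1, …, γ^δ·α_k)`, setting
`E = k·γ^{δk} + Σ a_{1i}²`, the Euclidean hull of the GRL code has dimension `1` when
`2ℓ < k`, or when `k = 2ℓ` and `E ≠ 0`; and dimension `2` when `k = 2ℓ` and `E = 0`. -/
theorem stmt4 {F : Type} [Field F] [Fintype F]
    (p m : ℕ) (hp : p.Prime) (hodd : Odd p) (hm : 0 < m)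
    (hcard : Fintype.card F = p ^ m)
    (γ : Fˣ) (hγ : ∀ x : Fˣ, x ∈ Subgroup.zpowers γ)
    (k ℓ : ℕ) (hℓ2 : 2 ≤ ℓ) (hℓk : ℓ ≤ k) (hkdvd : k ∣ Fintype.card F - 1)
    (A : Matrix (Fin ℓ) (Fin ℓ) F) (hA : IsUnit A.det)
    (α : Fin k → F)
    (hα : ∀ i : Fin k, α i = (γ : F) ^ ((Fintype.card F - 1) / k * ((i : ℕ) + 1)))
    (δ : ℕ) (hδ1 : 1 ≤ δ) (hδq : δ ≤ Fintype.card F - 1)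
    (hpk : p ∣ k + 1)
    (β : Fin (k + 1) → F) (hβ : β = Fin.cons 0 (fun i => (γ : F) ^ δ * α i))
    (E : F) (hE : E = (k : F) * (γ : F) ^ (δ * k) + ∑ i : Fin ℓ, A ⟨0, by omega⟩ i ^ 2) :
    (2 * ℓ < k →
        Module.finrank F ↥(GRLcode k ℓ hℓk β A ⊓ dualE (GRLcode k ℓ hℓk β A)) = 1) ∧
      (k = 2 * ℓ → E ≠ 0 →
        Module.finrank F ↥(GRLcode k ℓ hℓk β A ⊓ dualE (GRLcode k ℓ hℓk β A)) = 1) ∧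
      (k = 2 * ℓ → E = 0 →
        Module.finrank F ↥(GRLcode k ℓ hℓk β A ⊓ dualE (GRLcode k ℓ hℓk β A)) = 2) := by

  by_cases hlk : ℓ < k
  case neg =>
    exact ⟨fun h => absurd h (by omega), fun h => absurd h (by omega),
      fun h => absurd h (by omega)⟩
  case pos =>
  classical
  have hq1 : 1 < Fintype.card F := Fintype.one_lt_card
  have hk0 : 0 < k := by omega
  have hp0 : (p : F) = 0 := by
    have h1 : ((Fintype.card F : Nat) : F) = 0 := FiniteField.cast_card_eq_zero F
    rw [hcard] at h1
    push_cast at h1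
    exact (pow_eq_zero_iff (by omega)).1 h1
  have hk1 : ((k : Nat) : F) + 1 = 0 := by
    obtain ⟨t, ht⟩ := hpk
    have h2 : ((k + 1 : Nat) : F) = ((p * t : Nat) : F) := by rw [← ht]
    push_cast at h2
    rw [hp0, zero_mul] at h2
    exact h2
  have hkF : ((k : Nat) : F) = -1 := by linear_combination hk1
  have horder : orderOf γ = Fintype.card F - 1 := by
    rw [orderOf_eq_card_of_forall_mem_zpowers hγ, Nat.card_eq_fintype_card,
      Fintype.card_units]
  set d := (Fintype.card F - 1) / k with hd
  have hdk : d * k = Fintype.card F - 1 := Nat.div_mul_cancel hkdvd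
  have hd0 : 0 < d := by
    rcases Nat.eq_zero_or_pos d with h | h
    . rw [h, zero_mul] at hdk; omega
    . exact h
  have hγ1 : (γ : F) ^ (Fintype.card F - 1) = 1 := by
    have h1 := pow_orderOf_eq_one γ
    rw [horder] at h1
    have h2 := congrArg Units.val h1
    rw [Units.val_pow_eq_pow_val, Units.val_one] at h2
    exact h2
  have hζ : ∀ t : Nat, ((γ : F) ^ d) ^ t = 1 ↔ k ∣ t := by
    intro t
    rw [← pow_mul]
    constructor
    . intro h
      have hu : γ ^ (d * t) = 1 := Units.ext (by
        rw [Units.val_pow_eq_pow_val, Units.val_one]; exact h)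
      have hdvd := orderOf_dvd_of_pow_eq_one hu
      rw [horder, ← hdk] at hdvd
      exact (Nat.mul_dvd_mul_iff_left hd0).1 hdvd
    . rintro ⟨u, rfl⟩
      calc (γ : F) ^ (d * (k * u)) = ((γ : F) ^ (d * k)) ^ u := by
            rw [← pow_mul, mul_assoc]
        _ = 1 := by rw [hdk, hγ1, one_pow]
  have hsum : ∀ t : Nat, (∑ i : Fin k, α i ^ t) = if k ∣ t then ((k : Nat) : F) else 0 := by
    intro t
    have hcast : ∀ i : Fin k, α i ^ t = (((γ : F) ^ d) ^ t) ^ ((i : Nat) + 1) := by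
      intro i
      rw [hα i, ← pow_mul, ← pow_mul, ← pow_mul]
      congr 1
      ring
    rw [Finset.sum_congr rfl fun i _ => hcast i]
    have hxk : (((γ : F) ^ d) ^ t) ^ k = 1 := by
      have hone : ((γ : F) ^ d) ^ k = 1 := by rw [← pow_mul, hdk, hγ1]
      rw [← pow_mul, mul_comm t k, pow_mul, hone, one_pow]
    rw [geom_aux k _ hxk]
    by_cases hdvd : k ∣ t
    . rw [if_pos ((hζ t).2 hdvd), if_pos hdvd]
    . rw [if_neg (fun hx => hdvd ((hζ t).1 hx)), if_neg hdvd]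
  have hβinj : Function.Injective β := by
    rw [hβ, Fin.cons_injective_iff]
    constructor
    . rintro ⟨i, hi⟩
      have hne : (γ : F) ^ δ * α i ≠ 0 := mul_ne_zero (pow_ne_zero _ (Units.ne_zero γ))
        (by rw [hα]; exact pow_ne_zero _ (Units.ne_zero γ))
      exact hne hi
    . intro i j hij
      simp only at hij
      have h1 : α i = α j := mul_left_cancel₀ (pow_ne_zero δ (Units.ne_zero γ)) hij
      rw [hα, hα] at h1
      have h2 : γ ^ (d * ((i : Nat) + 1)) = γ ^ (d * ((j : Nat) + 1)) := Units.ext (by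
        rw [Units.val_pow_eq_pow_val, Units.val_pow_eq_pow_val]; exact h1)
      rw [pow_eq_pow_iff_modEq, horder] at h2
      have h2' : d * (i : Nat) + d ≡ d * (j : Nat) + d [MOD Fintype.card F - 1] := by
        have h3 := h2
        rw [show d * ((i : Nat) + 1) = d * (i : Nat) + d by ring,
          show d * ((j : Nat) + 1) = d * (j : Nat) + d by ring] at h3
        exact h3
      have h4 := Nat.ModEq.add_right_cancel' d h2'
      have hb : ∀ x : Fin k, d * (x : Nat) < Fintype.card F - 1 := by
        intro x
        calc d * (x : Nat) < d * k := by
              exact (Nat.mul_lt_mul_left hd0).2 x.isLt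
          _ = Fintype.card F - 1 := hdk
      have h5 := Nat.ModEq.eq_of_lt_of_lt h4 (hb i) (hb j)
      exact Fin.ext (Nat.eq_of_mul_eq_mul_left hd0 h5)
  set G := GRLmatrix k ℓ hℓk β A with hG
  set cc : F := ((k : Nat) : F) * (γ : F) ^ (δ * k) with hcc
  have hccne : cc ≠ 0 := by
    rw [hcc, hkF]
    exact mul_ne_zero (neg_ne_zero.2 one_ne_zero) (pow_ne_zero _ (Units.ne_zero γ))
  have hgram : ∀ r s : Fin k, (G * Gᵀ) r s =
      (if (r : Nat) + (s : Nat) = k then cc else 0) +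
      (if k - ℓ ≤ (r : Nat) ∧ k - ℓ ≤ (s : Nat) then
        (A * Aᵀ) ⟨(r : Nat) - (k - ℓ), by have := r.isLt; omega⟩
          ⟨(s : Nat) - (k - ℓ), by have := s.isLt; omega⟩ else 0) := by
    intro r s
    rw [Matrix.mul_apply, Fintype.sum_sum_type]
    congr 1
    . have he : ∀ j : Fin (k + 1), G r (Sum.inl j) * Gᵀ (Sum.inl j) s
          = β j ^ ((r : Nat) + (s : Nat)) := by
        intro j
        rw [Matrix.transpose_apply]
        simp only [hG, GRLmatrix, Sum.elim_inl]
        rw [← pow_add]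
      rw [Finset.sum_congr rfl fun j _ => he j, hβ, Fin.sum_univ_succ]
      simp only [Fin.cons_zero, Fin.cons_succ]
      rw [Finset.sum_congr rfl fun i _ => mul_pow ((γ:F)^δ) (α i) ((r : Nat) + (s : Nat)),
        ← Finset.mul_sum, hsum]
      by_cases hdvd : k ∣ (r : Nat) + (s : Nat)
      . have hcases : (r : Nat) + (s : Nat) = 0 ∨ (r : Nat) + (s : Nat) = k := by
          obtain ⟨u, hu⟩ := hdvd
          have hrk := r.isLt
          have hsk := s.isLt
          rcases u with _ | _ | u
          . left; omega
          . right; omega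
          . exfalso
            have hge : k * 2 ≤ k * (u + 2) := Nat.mul_le_mul_left k (by omega)
            have hlt : (r : Nat) + (s : Nat) < k * 2 := by omega
            rw [hu] at hlt
            exact absurd hlt (not_lt.2 hge)
        rcases hcases with h0 | hkk
        . rw [h0]
          rw [if_pos (dvd_zero k), if_neg (by omega : ¬(0 = k))]
          simp only [pow_zero, one_mul]
          linear_combination hk1
        . rw [hkk, if_pos (dvd_refl k), if_pos rfl]
          rw [zero_pow (by omega : k ≠ 0), zero_add, hcc, ← pow_mul]
          ring
      . rw [if_neg hdvd, mul_zero, add_zero]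
        have ht0 : (r : Nat) + (s : Nat) ≠ 0 := by
          intro h
          rw [h] at hdvd
          exact hdvd (dvd_zero k)
        rw [zero_pow ht0, if_neg (by
          intro h
          rw [h] at hdvd
          exact hdvd (dvd_refl k))]
    . by_cases hr : (r : Nat) < k - ℓ
      . rw [if_neg (fun hcon => absurd hcon.1 (by omega))]
        apply Finset.sum_eq_zero
        intro j _
        rw [Matrix.transpose_apply]
        simp only [hG, GRLmatrix, Sum.elim_inr]
        rw [dif_pos hr, zero_mul]
      . by_cases hs : (s : Nat) < k - ℓ
        . rw [if_neg (fun hcon => absurd hcon.2 (by omega))]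
          apply Finset.sum_eq_zero
          intro j _
          rw [Matrix.transpose_apply]
          simp only [hG, GRLmatrix, Sum.elim_inr]
          rw [dif_pos hs, mul_zero]
        . rw [if_pos (And.intro (by omega) (by omega)), Matrix.mul_apply]
          apply Finset.sum_congr rfl
          intro j _
          rw [Matrix.transpose_apply, Matrix.transpose_apply]
          simp only [hG, GRLmatrix, Sum.elim_inr]
          rw [dif_neg hr, dif_neg hs]
  have hEeq : E = cc + (A * Aᵀ) ⟨0, by omega⟩ ⟨0, by omega⟩ := by
    rw [hE, hcc, Matrix.mul_apply]
    congr 1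
    refine Finset.sum_congr rfl fun j _ => ?_
    rw [Matrix.transpose_apply, sq]
  have hinj := GRL_inj k ℓ hℓk β A hβinj
  have hcode : GRLcode k ℓ hℓk β A = Submodule.span F (Set.range G) := by
    rw [GRLcode, hG]
  have hfr : Module.finrank F ↥(GRLcode k ℓ hℓk β A ⊓ dualE (GRLcode k ℓ hℓk β A))
      = Module.finrank F ↥(LinearMap.ker (G * Gᵀ).vecMulLinear) := by
    rw [hcode]
    exact hull_finrank G hinj
  refine ⟨?_, ?_, ?_⟩
  . intro h2l
    rw [hfr, ker1 k ℓ hℓ2 hlk cc hccne (A * Aᵀ) (G * Gᵀ) hgram h2l]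
    exact finrank_span_singleton (e0v_ne F k hk0)
  . intro hk2 hEne
    rw [hfr, ker2 k ℓ hℓ2 hlk cc hccne (A * Aᵀ) (G * Gᵀ) hgram hk2
      (by rw [← hEeq]; exact hEne)]
    exact finrank_span_singleton (e0v_ne F k hk0)
  . intro hk2 hE0
    have hE0' : cc + (A * Aᵀ) ⟨0, by omega⟩ ⟨0, by omega⟩ = 0 := by
      rw [← hEeq]; exact hE0
    rw [hfr, ker3 k ℓ hℓ2 hlk cc hccne (A * Aᵀ) (G * Gᵀ) hgram hk2 hE0']
    apply finrank_span_pair _ _ (⟨0, by omega⟩ : Fin k) (⟨ℓ, by omega⟩ : Fin k)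
    . rw [e0v, Pi.single_eq_same]
    . rw [e0v, Pi.single_eq_of_ne]
      intro h
      have h2 : ℓ = 0 := congrArg Fin.val h
      omega
    . rw [vv, dif_neg (show ¬ (1 ≤ 0 ∧ 0 ≤ ℓ) by omega)]
    . rw [vv, dif_pos (show 1 ≤ ℓ ∧ ℓ ≤ ℓ by omega)]
      have hfin : (⟨ℓ - ℓ, by omega⟩ : Fin ℓ) = (⟨0, by omega⟩ : Fin ℓ) :=
        Fin.ext (show ℓ - ℓ = 0 by omega)
      rw [hfin]
      have hB : (A * Aᵀ) ⟨0, by omega⟩ ⟨0, by omega⟩ = -cc := by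
        linear_combination hE0'
      rw [hB, neg_neg, div_self hccne]
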